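/- arXiv:1305.3373 — 2 statements merged into one kernel-verified Lean document; each statement's English description precedes it below -/
import Mathlib

section
/- Every sequence s in P in which the entry 1 occurs at least three times admits a unique decomposition s = 1A1B1 with (1A1) ∈ T and (1B1) ∈ P, where T ⊂ P is the subset of sequences in which 1 occurs exactly twice. -/
/-!
A decomposition `s = 1A1B1` with `1A1 ∈ T` has `1 ∉ A`, so it can only cut `s` at its second
`1`, which gives uniqueness. Conversely, since `1` is dropped by the filter `1 < ·`, the
increasing list of entries `> 1` of `s` is the concatenation of those of `A` and of `B`, and
both halves inherit the increasing order, so the cut at the second `1` works.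
-/

/-- Admissible sequences: starting and ending with `1`, containing `1` at least
twice, with the entries greater than `1` pairwise distinct and appearing in
increasing order. -/
def memP (l : List ℕ) : Prop :=
  l.head? = some 1 ∧ l.getLast? = some 1 ∧ 2 ≤ l.count 1 ∧
  (l.filter (fun x => decide (1 < x))).Chain' (· < ·)

/-- The "connected" admissible sequences, in which `1` occurs exactly twice
(only at the two endpoints). -/
def memT (l : List ℕ) : Prop := memP l ∧ l.count 1 = 2

namespace List

variable {α : Type*}

theorem append_cons_inj_of_notMem_left [DecidableEq α] {x₁ x₂ z₁ z₂ : List α} {a : α}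
    (h₁ : a ∉ x₁) (h₂ : a ∉ x₂) (h : x₁ ++ a :: z₁ = x₂ ++ a :: z₂) : x₁ = x₂ ∧ z₁ = z₂ := by
  have hlen : x₁.length = x₂.length := by
    simpa [idxOf_append_of_notMem h₁, idxOf_append_of_notMem h₂] using congrArg (idxOf a) h
  obtain ⟨rfl, hz⟩ := append_inj h hlen
  exact ⟨rfl, (cons_inj_right a).mp hz⟩

theorem exists_eq_cons_append_singleton {l : List α} {a b : α} (ha : l.head? = some a)
    (hb : l.getLast? = some b) (hlen : 2 ≤ l.length) : ∃ m, l = a :: m ++ [b] := by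
  obtain ⟨m', rfl⟩ := getLast?_eq_some_iff.mp hb
  have hm' : m' ≠ [] := by rintro rfl; simp at hlen
  obtain ⟨m, rfl⟩ := head?_eq_some_iff.mp (by simpa [head?_append_of_ne_nil _ hm'] using ha)
  exact ⟨m, rfl⟩

end List

theorem filter_one_lt_one_cons_append_one (A : List ℕ) :
    (1 :: A ++ [1]).filter (1 < ·) = A.filter (1 < ·) := by
  simp [List.filter_append]

theorem memP_one_cons_append_one_iff (A : List ℕ) :
    memP (1 :: A ++ [1]) ↔ (A.filter (1 < ·)).IsChain (· < ·) := by
  simp only [memP, List.getLast?_concat, filter_one_lt_one_cons_append_one]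
  simp [List.count_append]
  exact Iff.rfl

theorem memT_one_cons_append_one_iff (A : List ℕ) :
    memT (1 :: A ++ [1]) ↔ 1 ∉ A ∧ (A.filter (1 < ·)).IsChain (· < ·) := by
  rw [memT, memP_one_cons_append_one_iff, and_comm, ← List.count_eq_zero]
  simp [List.count_append]

theorem filter_one_lt_one_cons_append_one_cons_append_one (A B : List ℕ) :
    (1 :: A ++ 1 :: B ++ [1]).filter (1 < ·) = A.filter (1 < ·) ++ B.filter (1 < ·) := by
  simp [List.filter_append]

theorem memP.exists_eq_one_cons_append_one_cons_append_one {l : List ℕ} (hl : memP l)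
    (h3 : 3 ≤ l.count 1) : ∃ A B, 1 ∉ A ∧ l = 1 :: A ++ 1 :: B ++ [1] := by
  obtain ⟨m, rfl⟩ := List.exists_eq_cons_append_singleton hl.1 hl.2.1
    (by have := l.count_le_length (a := 1); omega)
  have hm : 1 ∈ m := by simpa [List.count_append] using h3
  obtain ⟨A, B, rfl, hA⟩ := List.eq_append_cons_of_mem hm
  exact ⟨A, B, hA, by simp⟩

/-- every admissible sequence `s ∈ P` in which `1` occurs at least
three times admits a unique decomposition `s = 1A1B1` with `(1A1) ∈ T` and
`(1B1) ∈ P`. -/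
theorem unique_connected_decomposition (l : List ℕ) (hl : memP l)
    (h3 : 3 ≤ l.count 1) :
    ∃! p : List ℕ × List ℕ,
      l = 1 :: p.1 ++ 1 :: p.2 ++ [1]
        ∧ memT (1 :: p.1 ++ [1]) ∧ memP (1 :: p.2 ++ [1]) := by
  obtain ⟨A, B, hA, rfl⟩ := hl.exists_eq_one_cons_append_one_cons_append_one h3
  have hchain : (A.filter (1 < ·) ++ B.filter (1 < ·)).IsChain (· < ·) :=
    filter_one_lt_one_cons_append_one_cons_append_one A B ▸ hl.2.2.2
  refine ⟨(A, B), ⟨rfl, (memT_one_cons_append_one_iff A).mpr ⟨hA, hchain.left_of_append⟩,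
    (memP_one_cons_append_one_iff B).mpr hchain.right_of_append⟩, ?_⟩
  rintro ⟨A', B'⟩ ⟨hl', hT, -⟩
  obtain ⟨rfl, hB⟩ := List.append_cons_inj_of_notMem_left
    ((memT_one_cons_append_one_iff A').mp hT).1 hA (by simpa using hl'.symm)
  rw [List.append_cancel_right hB]
end

section
/- In the setting of Theorem 5, for A = {1^{×n}, 2^{×m}} with n, m ≥ 2, any sequence s ∈ S_{1,1}(A') followed by gluing with a [2C2]-path via the identity [1B1]_φ[2C2]_φ = [1B12C2]_φ/φ₁₂ establishes: the number of sequences in S_{1,2}(A) equals the number of pairs ((1B1),(2C2)) of paths with the stated constraints plus paths (1B1) with A = {1,1,2,B}, i.e. the gluing map [1B1]·[2C2] ↦ [1B12C2]/φ₁₂ and [1B1] ↦ [1B12]/φ₁₂ is a weight-preserving bijection onto paths from 1 to 2. -/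
/-- The weight `[s]_φ` of a sequence of indices. -/
def seqWeight (φ : ℂ → ℂ) (θ : ℕ → ℂ) : List ℕ → ℂ
  | [] => 1
  | [_] => 1
  | a :: b :: rest => φ (θ a - θ b) * seqWeight φ θ (b :: rest)

/-- The gluing map: a pair `(B, C)` is sent to the path `1B12C2`, a single
list `B` is sent to the path `1B12`. -/
def glue : List ℕ × List ℕ ⊕ List ℕ → List ℕ
  | .inl (B, C) => 1 :: B ++ [1] ++ 2 :: C ++ [2]
  | .inr B => 1 :: B ++ [1, 2]

/-- Domain of the gluing map for the multiset `A`: pairs `((1B1),(2C2))` with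
`C` consisting only of `2`'s and total content `A`, together with single paths
`(1B1)` with `A = {1,1,2,B}`. -/
def glueDom (A : Multiset ℕ) : Set (List ℕ × List ℕ ⊕ List ℕ) :=
  {x | match x with
    | .inl (B, C) => ((1 :: B ++ [1] ++ 2 :: C ++ [2] : List ℕ) : Multiset ℕ) = A ∧ ∀ y ∈ C, y = 2
    | .inr B => ((1 :: B ++ [1, 2] : List ℕ) : Multiset ℕ) = A}

/-- `S_{1,2}(A)`: sequences with content `A`, starting with `1`, ending with `2`. -/
def S12set (A : Multiset ℕ) : Set (List ℕ) :=
  {l | (↑l : Multiset ℕ) = A ∧ l.head? = some 1 ∧ l.getLast? = some 2}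

/-!
The weight `[·]_φ` is multiplicative under splitting a sequence at a shared letter, and the edge
`1 → 2` contributes the factor `φ₁₂`; this gives both identities. A sequence from `1` to `2` over
`{1, 2}` with at least two `1`s splits uniquely at its last `1`: what follows is a nonempty run
of `2`s, either the single final `2` (the image of `[1B1]`) or `2C2` (the image of
`([1B1], [2C2])`).
-/

namespace List

variable {α : Type*}

theorem exists_eq_append_cons_notMem_of_mem {a : α} :
    ∀ {l : List α}, a ∈ l → ∃ s t, l = s ++ a :: t ∧ a ∉ t
  | x :: l, h => by
    by_cases hl : a ∈ l
    · obtain ⟨s, t, rfl, ht⟩ := exists_eq_append_cons_notMem_of_mem hl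
      exact ⟨x :: s, t, rfl, ht⟩
    · obtain rfl : a = x := by simpa [hl] using h
      exact ⟨[], l, rfl, hl⟩

theorem append_cons_inj_of_notMem_right {s₁ s₂ t₁ t₂ : List α} {a : α}
    (h₁ : a ∉ t₁) (h₂ : a ∉ t₂) : s₁ ++ a :: t₁ = s₂ ++ a :: t₂ ↔ s₁ = s₂ ∧ t₁ = t₂ := by
  refine ⟨fun h => ?_, fun ⟨hs, ht⟩ => hs ▸ ht ▸ rfl⟩
  induction s₁ generalizing s₂ with
  | nil =>
    cases s₂ with
    | nil => simpa using h
    | cons y s₂ => simp_all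
  | cons x s₁ ih =>
    cases s₂ with
    | nil => simp only [cons_append, nil_append, cons.injEq] at h; simp [← h.2] at h₂
    | cons y s₂ =>
      simp only [cons_append, cons.injEq] at h
      simpa [h.1] using ih h.2

end List

theorem glue_inl (B C : List ℕ) : glue (.inl (B, C)) = 1 :: B ++ 1 :: 2 :: (C ++ [2]) := by
  simp [glue]

theorem glue_inr (B : List ℕ) : glue (.inr B) = 1 :: B ++ [1, 2] := rfl

section Weight

variable (φ : ℂ → ℂ) (θ : ℕ → ℂ)

theorem seqWeight_append_cons (l₁ : List ℕ) (a : ℕ) (l₂ : List ℕ) :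
    seqWeight φ θ (l₁ ++ a :: l₂) = seqWeight φ θ (l₁ ++ [a]) * seqWeight φ θ (a :: l₂) := by
  induction l₁ with
  | nil => simp [seqWeight]
  | cons x l₁ ih =>
    cases l₁ with
    | nil => simp [seqWeight]
    | cons y l₁ =>
      simp only [List.cons_append, seqWeight] at ih ⊢
      rw [ih, mul_assoc]

theorem seqWeight_append_cons_cons (l₁ : List ℕ) (a b : ℕ) (l₂ : List ℕ) :
    seqWeight φ θ (l₁ ++ a :: b :: l₂)
      = φ (θ a - θ b) * (seqWeight φ θ (l₁ ++ [a]) * seqWeight φ θ (b :: l₂)) := by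
  rw [seqWeight_append_cons, seqWeight]
  ring

theorem seqWeight_glue_inl (B C : List ℕ) :
    seqWeight φ θ (glue (.inl (B, C)))
      = φ (θ 1 - θ 2) * (seqWeight φ θ (1 :: B ++ [1]) * seqWeight φ θ (2 :: C ++ [2])) := by
  rw [glue_inl, seqWeight_append_cons_cons]
  rfl

theorem seqWeight_glue_inr (B : List ℕ) :
    seqWeight φ θ (glue (.inr B)) = φ (θ 1 - θ 2) * seqWeight φ θ (1 :: B ++ [1]) := by
  rw [glue_inr, seqWeight_append_cons_cons, seqWeight, mul_one]

end Weight

section Gluing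

variable {A : Multiset ℕ}

theorem mapsTo_glue : Set.MapsTo glue (glueDom A) (S12set A) := by
  rintro (⟨B, C⟩ | B) hx
  · exact ⟨hx.1, by simp [glue], by simp [glue, List.getLast?_cons]⟩
  · exact ⟨hx, by simp [glue], by simp [glue, List.getLast?_cons]⟩

theorem injOn_glue : Set.InjOn glue (glueDom A) := by
  have one_notMem {C : List ℕ} (hC : ∀ y ∈ C, y = 2) : 1 ∉ 2 :: (C ++ [2]) := fun h => by
    simpa using hC 1 (by simpa using h)
  rintro (⟨B, C⟩ | B) hx (⟨B', C'⟩ | B') hy h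
  · rw [glue_inl, glue_inl, List.append_cons_inj_of_notMem_right (one_notMem hx.2)
      (one_notMem hy.2)] at h
    simpa using h
  · rw [glue_inl, glue_inr, List.append_cons_inj_of_notMem_right (one_notMem hx.2) (by simp)] at h
    simp at h
  · rw [glue_inr, glue_inl, List.append_cons_inj_of_notMem_right (by simp) (one_notMem hy.2)] at h
    simp at h
  · rw [glue_inr, glue_inr, List.append_cons_inj_of_notMem_right (by simp) (by simp)] at h
    simpa using h

theorem surjOn_glue (hA : ∀ x ∈ A, x = 1 ∨ x = 2) (h1 : 2 ≤ A.count 1) :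
    Set.SurjOn glue (glueDom A) (S12set A) := by
  rintro l ⟨rfl, hhead, hlast⟩
  have h1l : 1 ∈ l := Multiset.mem_coe.1 (Multiset.count_pos.1 (by omega))
  obtain ⟨s, t, rfl, ht⟩ := List.exists_eq_append_cons_notMem_of_mem h1l
  have ht2 : ∀ x ∈ t, x = 2 := fun x hx =>
    (hA x (by simp [hx])).resolve_left (by rintro rfl; exact ht hx)
  obtain ⟨B, rfl⟩ : ∃ B, s = 1 :: B := by
    cases s with
    | nil => simp [List.count_eq_zero.2 ht] at h1
    | cons x B => exact ⟨B, by simpa using hhead⟩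
  obtain ⟨k, rfl⟩ : ∃ k, t = List.replicate (k + 1) 2 := by
    cases t with
    | nil => simp [List.getLast?_cons] at hlast
    | cons x t => exact ⟨_, List.eq_replicate_iff.2 ⟨rfl, ht2⟩⟩
  cases k with
  | zero => exact ⟨.inr B, rfl, rfl⟩
  | succ k =>
    have hglue :
        glue (.inl (B, List.replicate k 2)) = 1 :: B ++ 1 :: List.replicate (k + 2) 2 := by
      rw [glue_inl, List.replicate_succ, List.replicate_succ']
    refine ⟨.inl (B, List.replicate k 2), ⟨?_, fun _ => List.eq_of_mem_replicate⟩, hglue⟩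
    rw [← hglue]
    rfl

end Gluing

/-- for `A = {1^{×n}, 2^{×m}}` with `n, m ≥ 2` and `φ₁₂ ≠ 0`,
the identities `[1B1]_φ[2C2]_φ = [1B12C2]_φ/φ₁₂` and `[1B1]_φ = [1B12]_φ/φ₁₂`
hold, and the gluing map `[1B1]·[2C2] ↦ [1B12C2]/φ₁₂`, `[1B1] ↦ [1B12]/φ₁₂`
is a weight-preserving bijection onto the paths from `1` to `2`. -/
theorem gluing_bijection_two_rapidities (φ : ℂ → ℂ) (θ : ℕ → ℂ)
    (hφ : φ (θ 1 - θ 2) ≠ 0) :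
    (∀ B C : List ℕ,
      seqWeight φ θ (1 :: B ++ [1]) * seqWeight φ θ (2 :: C ++ [2])
          = seqWeight φ θ (1 :: B ++ [1] ++ 2 :: C ++ [2]) / φ (θ 1 - θ 2)
      ∧ seqWeight φ θ (1 :: B ++ [1])
          = seqWeight φ θ (1 :: B ++ [1, 2]) / φ (θ 1 - θ 2))
    ∧ ∀ n m : ℕ, 2 ≤ n → 2 ≤ m →
        (Set.BijOn glue
            (glueDom (Multiset.replicate n 1 + Multiset.replicate m 2))
            (S12set (Multiset.replicate n 1 + Multiset.replicate m 2))
        ∧ ∀ x ∈ glueDom (Multiset.replicate n 1 + Multiset.replicate m 2),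
            seqWeight φ θ (glue x)
              = φ (θ 1 - θ 2) *
                (match x with
                  | .inl (B, C) =>
                      seqWeight φ θ (1 :: B ++ [1]) * seqWeight φ θ (2 :: C ++ [2])
                  | .inr B => seqWeight φ θ (1 :: B ++ [1]))) := by
  refine ⟨fun B C => ⟨?_, ?_⟩, fun n m hn _ => ⟨⟨mapsTo_glue, injOn_glue, ?_⟩, ?_⟩⟩
  · exact eq_div_of_mul_eq hφ (by rw [mul_comm, ← seqWeight_glue_inl]; rfl)
  · exact eq_div_of_mul_eq hφ (by rw [mul_comm, ← seqWeight_glue_inr]; rfl)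
  · refine surjOn_glue (fun x hx => ?_) (by simp [Multiset.count_replicate, hn])
    rcases Multiset.mem_add.1 hx with h | h
    · exact .inl (Multiset.eq_of_mem_replicate h)
    · exact .inr (Multiset.eq_of_mem_replicate h)
  · rintro (⟨B, C⟩ | B) -
    · exact seqWeight_glue_inl φ θ B C
    · exact seqWeight_glue_inr φ θ B
end
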